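/- arXiv:1311.0185 — 6 statements merged into one kernel-verified Lean document; each statement's English description precedes it below -/
import Mathlib

section
/- Let f, f' : A* → B* and g, g' : B* → C* be morphisms such that f is conjugate to f' and g is conjugate to g'. Then the compositions g∘f and g'∘f' are conjugate. -/
open List

/-- The prefix of length `n` of an infinite word `x`. -/
def wordTake {A : Type*} (x : ℕ → A) (n : ℕ) : List A := (List.range n).map x

/-- The finite word `u` occurs in the infinite word `x` at position `i`. -/
def OccursAt {A : Type*} (u : List A) (x : ℕ → A) (i : ℕ) : Prop :=
  (List.range u.length).map (fun k => x (i + k)) = u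

/-- `u` is a factor of the infinite word `x`. -/
def IsFactor {A : Type*} (u : List A) (x : ℕ → A) : Prop := ∃ i, OccursAt u x i

/-- A palindrome is a finite word equal to its reversal. -/
def IsPalindrome {A : Type*} (u : List A) : Prop := u.reverse = u

/-- The number of distinct palindromic factors of a finite word `u`
(including the empty word). -/
noncomputable def palCount {A : Type*} (u : List A) : ℕ :=
  {v : List A | v <:+: u ∧ IsPalindrome v}.ncard

/-- A finite word `u` is rich if it has `|u| + 1` distinct palindromic factors. -/
def RichList {A : Type*} (u : List A) : Prop := palCount u = u.length + 1

/-- An infinite word is rich if all of its factors are rich. -/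
def RichWord {A : Type*} (x : ℕ → A) : Prop := ∀ u, IsFactor u x → RichList u

/-- The defect of a finite word. -/
noncomputable def defect {A : Type*} (u : List A) : ℕ := u.length + 1 - palCount u

/-- An infinite word has finite defect if the defects of its prefixes are bounded. -/
def FiniteDefect {A : Type*} (x : ℕ → A) : Prop :=
  ∃ C, ∀ n, defect (wordTake x n) ≤ C

/-- The extension of a morphism (given by its values on letters) to finite words. -/
def listApply {A B : Type*} (f : A → List B) (w : List A) : List B := w.flatMap f

/-- A morphism is non-erasing if the image of every letter is non-empty. -/
def NonErasing {A B : Type*} (f : A → List B) : Prop := ∀ a, f a ≠ []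

/-- `y` is the image of the infinite word `x` under the morphism `f`, i.e. `y = f(x)` :
the image of every prefix of `x` is a prefix of `y`. -/
def IsMorphicImage {A B : Type*} (f : A → List B) (x : ℕ → A) (y : ℕ → B) : Prop :=
  ∀ k, ∃ n, listApply f (wordTake x k) = wordTake y n

/-- A substitution is primitive if some power `τ^N` (`N ≥ 1`) maps every letter to a word
containing every letter. -/
def Primitive {A : Type*} (τ : A → List A) : Prop :=
  ∃ N : ℕ, 1 ≤ N ∧ ∀ a b : A, b ∈ (listApply τ)^[N] [a]

/-- An infinite word is pure primitive morphic if it is a fixed point of a primitive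
substitution. -/
def PurePrimitiveMorphic {A : Type*} (x : ℕ → A) : Prop :=
  ∃ τ : A → List A, NonErasing τ ∧ Primitive τ ∧ IsMorphicImage τ x x

/-- An infinite word is primitive morphic if it is the morphic image of a pure primitive
morphic word over some finite alphabet. -/
def PrimitiveMorphic {B : Type*} (y : ℕ → B) : Prop :=
  ∃ (A : Type) (_ : Fintype A) (f : A → List B) (x : ℕ → A),
    NonErasing f ∧ PurePrimitiveMorphic x ∧ IsMorphicImage f x y

/-- A morphism is of class P if `f(a) = p qₐ` with `p` and each `qₐ` palindromes. -/
def ClassP {A B : Type*} (f : A → List B) : Prop :=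
  ∃ p : List B, IsPalindrome p ∧ ∀ a, ∃ q : List B, IsPalindrome q ∧ f a = p ++ q

/-- Two morphisms are conjugate if `f(a)u = u g(a)` for all `a`, or `u f(a) = g(a) u`
for all `a`, for some finite word `u`. -/
def Conjugate {A B : Type*} (f g : A → List B) : Prop :=
  ∃ u : List B, (∀ a, f a ++ u = u ++ g a) ∨ (∀ a, u ++ f a = g a ++ u)

/-- Class P' : morphisms conjugate to some class P morphism. -/
def ClassP' {A B : Type*} (f : A → List B) : Prop :=
  ∃ g : A → List B, ClassP g ∧ Conjugate f g

/-- `FP'` : infinite words fixed by some primitive substitution of class P'. -/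
def InFPprime {A : Type*} (x : ℕ → A) : Prop :=
  ∃ τ : A → List A, NonErasing τ ∧ Primitive τ ∧ ClassP' τ ∧ IsMorphicImage τ x x

/-- The number of occurrences of `u` in the finite word `w`. -/
noncomputable def occCount {A : Type*} (u w : List A) : ℕ :=
  {i : ℕ | i + u.length ≤ w.length ∧ (w.drop i).take u.length = u}.ncard

/-- `v` is a first return to the non-empty factor `u` in `x` : `vu` is a factor of `x`
beginning (and ending) in `u` and containing exactly two occurrences of `u`;
`vu` is then the corresponding complete first return to `u`. -/
def FirstReturn {A : Type*} (u : List A) (x : ℕ → A) (v : List A) : Prop :=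
  u ≠ [] ∧ IsFactor (v ++ u) x ∧ u <+: (v ++ u) ∧ occCount u (v ++ u) = 2

/-- An infinite word is uniformly recurrent if every factor occurs in every sufficiently
long factor. -/
def UniformlyRecurrent {A : Type*} (x : ℕ → A) : Prop :=
  ∀ u : List A, IsFactor u x → ∃ n, ∀ v : List A, IsFactor v x → v.length = n → u <:+: v

/-- `d` is the derived word of `x` at the non-empty prefix `u` : `x` factors as a
concatenation `r 0, r 1, r 2, …` of first returns to `u` (each complete first return
`r n ++ u` occurring at the corresponding partial-sum position), and `d n` is the rank
of `r n` in the order of first occurrence, i.e. the number of distinct return words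
appearing strictly before the first occurrence of `r n`. -/
def IsDerivedWord {A : Type*} (x : ℕ → A) (u : List A) (d : ℕ → ℕ) : Prop :=
  ∃ r : ℕ → List A,
    (∀ n, FirstReturn u x (r n)) ∧
    (∀ n, OccursAt (r n ++ u) x (∑ i ∈ Finset.range n, (r i).length)) ∧
    (∀ n, d n = (r '' {k | k < sInf {k | r k = r n}}).ncard)

/-- Class P_ret of Balková et al.: a morphism injective on letters such that for some
palindrome `p` (the marker), each `f(a)p` is a palindrome beginning and ending in `p`
and containing exactly two occurrences of `p`. -/
def ClassPret {A B : Type*} (f : A → List B) : Prop :=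
  (∀ a b : A, a ≠ b → f a ≠ f b) ∧
  ∃ p : List B, IsPalindrome p ∧ ∀ a,
    IsPalindrome (f a ++ p) ∧ p <+: (f a ++ p) ∧ p <:+ (f a ++ p) ∧
      occCount p (f a ++ p) = 2

def IsConjBy {A B : Type*} (u : List B) (f g : A → List B) : Prop :=
  ∀ a, f a ++ u = u ++ g a

section

variable {A B C : Type*}

theorem conjugate_iff {f g : A → List B} :
    Conjugate f g ↔ ∃ u, IsConjBy u f g ∨ IsConjBy u g f :=
  exists_congr fun _ => or_congr Iff.rfl ⟨fun h a => (h a).symm, fun h a => (h a).symm⟩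

theorem Conjugate.symm {f g : A → List B} (h : Conjugate f g) : Conjugate g f := by
  obtain ⟨u, h | h⟩ := conjugate_iff.1 h
  exacts [conjugate_iff.2 ⟨u, Or.inr h⟩, conjugate_iff.2 ⟨u, Or.inl h⟩]

theorem listApply_append (g : B → List C) (w₁ w₂ : List B) :
    listApply g (w₁ ++ w₂) = listApply g w₁ ++ listApply g w₂ :=
  flatMap_append

section Word

variable {u v t s : List B} {f g h : A → List B}

theorem IsConjBy.trans (hfg : IsConjBy u f g) (hgh : IsConjBy v g h) :
    IsConjBy (u ++ v) f h := fun a => by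
  rw [← append_assoc, hfg, append_assoc, hgh, append_assoc]

theorem IsConjBy.cancel_right (hfh : IsConjBy (t ++ v) f h) (hgh : IsConjBy v g h) :
    IsConjBy t f g := fun a =>
  append_cancel_right (bs := v) (by rw [append_assoc, hfh, append_assoc, ← hgh, append_assoc])

theorem IsConjBy.cancel_left (hfg : IsConjBy u f g) (hfh : IsConjBy (u ++ s) f h) :
    IsConjBy s g h := fun a =>
  append_cancel_left (as := u) (by rw [← append_assoc, ← hfg, append_assoc, hfh, append_assoc])

end Word

variable {f f' : A → List B} {g g' : B → List C} {u : List B} {v : List C}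

theorem IsConjBy.listApply_listApply (h : IsConjBy v g g') :
    IsConjBy v (listApply g) (listApply g') := by
  intro w
  induction w with
  | nil => simp [listApply]
  | cons b w ih =>
    simp only [listApply, flatMap_cons] at ih ⊢
    rw [append_assoc, ih, ← append_assoc, h b, append_assoc]

theorem IsConjBy.comp_left (h : IsConjBy u f f') (g : B → List C) :
    IsConjBy (listApply g u) (fun a => listApply g (f a)) (fun a => listApply g (f' a)) :=
  fun a => by simp only [← listApply_append, h a]

theorem IsConjBy.comp_right (h : IsConjBy v g g') (f : A → List B) :
    IsConjBy v (fun a => listApply g (f a)) (fun a => listApply g' (f a)) :=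
  fun a => h.listApply_listApply (f a)

theorem conjugate_comp_of_isConjBy (hu : IsConjBy u f f') (hv : IsConjBy v g g') :
    Conjugate (fun a => listApply g (f a)) (fun a => listApply g' (f' a)) :=
  conjugate_iff.2 ⟨_, Or.inl ((hu.comp_left g).trans (hv.comp_right f'))⟩

/-- Comparing `g'(u) v = v g(u)` splits into `g(u) = t v`, where `t` conjugates, or
`v = g'(u) s`, where `s` conjugates the other way. -/
theorem conjugate_comp_of_isConjBy_of_isConjBy_swap (hu : IsConjBy u f f')
    (hv : IsConjBy v g' g) :
    Conjugate (fun a => listApply g (f a)) (fun a => listApply g' (f' a)) := by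
  rcases append_eq_append_iff.1 (hv.listApply_listApply u).symm with
    ⟨t, -, hgu⟩ | ⟨s, hvs, -⟩
  · have hgf_gf' := hu.comp_left g
    rw [hgu] at hgf_gf'
    exact conjugate_iff.2 ⟨t, Or.inl (hgf_gf'.cancel_right (hv.comp_right f'))⟩
  · have hg'f_gf := hv.comp_right f
    rw [hvs] at hg'f_gf
    exact conjugate_iff.2 ⟨s, Or.inr ((hu.comp_left g').cancel_left hg'f_gf)⟩

end

/-- Conjugation of morphisms is compatible with composition. -/
theorem conjugate_comp {A B C : Type*} (f f' : A → List B) (g g' : B → List C)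
    (hf : Conjugate f f') (hg : Conjugate g g') :
    Conjugate (fun a => listApply g (f a)) (fun a => listApply g' (f' a)) := by
  obtain ⟨u, hu | hu⟩ := conjugate_iff.1 hf <;> obtain ⟨v, hv | hv⟩ := conjugate_iff.1 hg
  · exact conjugate_comp_of_isConjBy hu hv
  · exact conjugate_comp_of_isConjBy_of_isConjBy_swap hu hv
  · exact (conjugate_comp_of_isConjBy_of_isConjBy_swap hu hv).symm
  · exact (conjugate_comp_of_isConjBy hu hv).symm
end

section
/- Let y be a rich, uniformly recurrent infinite word beginning in the letter 0. Then the derived word D_0(y) of y at the prefix 0 is rich and begins in the letter 0 of the derived alphabet. -/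
/-!
A finite word is rich iff each of its nonempty prefixes has a unioccurrent palindromic suffix,
because appending a letter creates at most one new palindromic factor. Write `a = y 0` and let
`r n` be the return words, so that the factor `d i ⋯ d (i + L - 1)` of the derived word codes
the factor `r i ⋯ r (i + L - 1) a` of `y`. Richness of `y` makes every `r n a` a palindrome.
The unioccurrent palindromic suffix of `r i ⋯ r (i + L - 1) a` begins and ends in `a`, so it is
`r j ⋯ r (i + L - 1) a` for some block boundary `j`; since it is a palindrome built from
palindromic blocks `r n a`, the block sequence `r j, …, r (i + L - 1)` is itself a palindrome,
and its code `d j ⋯ d (i + L - 1)` is a unioccurrent palindromic suffix of the factor of `d`.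
-/

open List

section Palindromes

variable {α : Type*}

def palFactors (u : List α) : Set (List α) := {v | v <:+: u ∧ IsPalindrome v}

def unioccurrentPalSuffixes (w : List α) : Set (List α) :=
  {p | IsPalindrome p ∧ p <:+ w ∧ ¬ p <:+: w.dropLast}

def HasUnioccurrentPalSuffix (w : List α) : Prop := (unioccurrentPalSuffixes w).Nonempty

theorem IsPalindrome.head?_eq_getLast? {p : List α} (hp : IsPalindrome p) :
    p.head? = p.getLast? := by
  rw [← List.getLast?_reverse, hp]

theorem IsPalindrome.infix_dropLast_of_suffix {v p w : List α} (hv : IsPalindrome v)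
    (hp : IsPalindrome p) (hvp : v <:+ p) (hlt : v.length < p.length) (hpw : p <:+ w) :
    v <:+: w.dropLast := by
  obtain ⟨t, rfl⟩ : v <+: p := by rw [← hv, ← hp]; exact List.reverse_prefix.mpr hvp
  obtain ⟨s, rfl⟩ := hpw
  have ht : t ≠ [] := by rintro rfl; simp at hlt
  exact ⟨s, t.dropLast, by simp [← List.append_assoc, List.dropLast_append_of_ne_nil ht]⟩

theorem unioccurrentPalSuffixes_subsingleton (w : List α) :
    (unioccurrentPalSuffixes w).Subsingleton := by
  intro p ⟨hp, hpw, hp'⟩ q ⟨hq, hqw, hq'⟩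
  wlog hle : p.length ≤ q.length generalizing p q
  · exact (this hq hqw hq' hp hpw hp' (by omega)).symm
  have hpq := List.suffix_of_suffix_length_le hpw hqw hle
  rcases hle.lt_or_eq with hlt | heq
  · exact absurd (hp.infix_dropLast_of_suffix hq hpq hlt hqw) hp'
  · exact hpq.eq_of_length heq

theorem palFactors_append_singleton (p : List α) (c : α) :
    palFactors (p ++ [c]) = palFactors p ∪ unioccurrentPalSuffixes (p ++ [c]) := by
  ext v
  simp only [palFactors, unioccurrentPalSuffixes, List.dropLast_concat, Set.mem_union,
    Set.mem_ofPred_eq, List.infix_concat_iff]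
  constructor
  · rintro ⟨hv | hv, hpal⟩
    · by_cases hvp : v <:+: p
      · exact Or.inl ⟨hvp, hpal⟩
      · exact Or.inr ⟨hpal, hv, hvp⟩
    · exact Or.inl ⟨hv, hpal⟩
  · rintro (⟨hv, hpal⟩ | ⟨hpal, hv, -⟩)
    · exact ⟨Or.inr hv, hpal⟩
    · exact ⟨Or.inl hv, hpal⟩

theorem palFactors_finite (u : List α) : (palFactors u).Finite := by
  refine (List.finite_toSet (u.tails.flatMap List.inits)).subset fun v hv => ?_
  obtain ⟨t, hvt, htu⟩ := List.infix_iff_prefix_suffix.mp hv.1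
  exact List.mem_flatMap.mpr ⟨t, (List.mem_tails _ _).mpr htu, (List.mem_inits _ _).mpr hvt⟩

theorem palCount_append_singleton_of_hasUnioccurrentPalSuffix {p : List α} {c : α}
    (h : HasUnioccurrentPalSuffix (p ++ [c])) : palCount (p ++ [c]) = palCount p + 1 := by
  obtain ⟨q, hq⟩ := h
  have hq' : q ∉ palFactors p := fun h => hq.2.2 (by simpa using h.1)
  rw [palCount, ← palFactors, palFactors_append_singleton,
    (unioccurrentPalSuffixes_subsingleton _).eq_singleton_of_mem hq, Set.union_singleton,
    Set.ncard_insert_of_notMem hq' (palFactors_finite p), palCount, palFactors]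

theorem palCount_append_singleton_of_not_hasUnioccurrentPalSuffix {p : List α} {c : α}
    (h : ¬ HasUnioccurrentPalSuffix (p ++ [c])) : palCount (p ++ [c]) = palCount p := by
  rw [palCount, ← palFactors, palFactors_append_singleton,
    Set.not_nonempty_iff_eq_empty.mp h, Set.union_empty, palCount, palFactors]

theorem palCount_nil : palCount ([] : List α) = 1 := by
  have : palFactors ([] : List α) = {[]} := by ext v; simp +contextual [palFactors, IsPalindrome]
  rw [palCount, ← palFactors, this, Set.ncard_singleton]

theorem palCount_le_length_add_one (w : List α) : palCount w ≤ w.length + 1 := by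
  induction w using List.reverseRecOn with
  | nil => simp [palCount_nil]
  | append_singleton p c ih =>
    by_cases h : HasUnioccurrentPalSuffix (p ++ [c])
    · simp [palCount_append_singleton_of_hasUnioccurrentPalSuffix h, ih]
    · simp only [palCount_append_singleton_of_not_hasUnioccurrentPalSuffix h, List.length_append]
      omega

theorem richList_append_singleton_iff {p : List α} {c : α} :
    RichList (p ++ [c]) ↔ RichList p ∧ HasUnioccurrentPalSuffix (p ++ [c]) := by
  have hp := palCount_le_length_add_one p
  by_cases h : HasUnioccurrentPalSuffix (p ++ [c])
  · simp [RichList, palCount_append_singleton_of_hasUnioccurrentPalSuffix h, h]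
  · simp only [RichList, palCount_append_singleton_of_not_hasUnioccurrentPalSuffix h, h,
      List.length_append, List.length_singleton, and_false, iff_false]
    omega

theorem richList_of_forall_prefix {w : List α}
    (h : ∀ p, p ≠ [] → p <+: w → HasUnioccurrentPalSuffix p) : RichList w := by
  induction w using List.reverseRecOn with
  | nil => simp [RichList, palCount_nil]
  | append_singleton p c ih =>
    exact richList_append_singleton_iff.mpr
      ⟨ih fun q hq hqp => h q hq (hqp.trans (List.prefix_append p [c])),
        h _ (by simp) List.prefix_rfl⟩

end Palindromes

section Occurrences

variable {α : Type*}

def factorAt (x : ℕ → α) (i n : ℕ) : List α := (List.range n).map fun k => x (i + k)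

theorem occursAt_iff_factorAt {u : List α} {x : ℕ → α} {i : ℕ} :
    OccursAt u x i ↔ factorAt x i u.length = u := Iff.rfl

theorem factorAt_add (x : ℕ → α) (i m n : ℕ) :
    factorAt x i (m + n) = factorAt x i m ++ factorAt x (i + m) n := by
  simp [factorAt, List.range_add, Nat.add_assoc]

theorem factorAt_succ (x : ℕ → α) (i n : ℕ) :
    factorAt x i (n + 1) = x i :: factorAt x (i + 1) n := by
  rw [Nat.add_comm, factorAt_add]
  simp [factorAt]

theorem factorAt_comp {β : Type*} (f : α → β) (x : ℕ → α) (i n : ℕ) :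
    factorAt (f ∘ x) i n = (factorAt x i n).map f := by
  simp [factorAt]

theorem occursAt_append_iff {u v : List α} {x : ℕ → α} {i : ℕ} :
    OccursAt (u ++ v) x i ↔ OccursAt u x i ∧ OccursAt v x (i + u.length) := by
  simp only [occursAt_iff_factorAt, List.length_append, factorAt_add]
  constructor
  · intro h
    exact List.append_inj h (by simp [factorAt])
  · rintro ⟨hu, hv⟩
    rw [hu, hv]

theorem OccursAt.of_prefix {u v : List α} {x : ℕ → α} {i : ℕ} (hu : OccursAt u x i)
    (hvu : v <+: u) : OccursAt v x i := by
  obtain ⟨t, rfl⟩ := hvu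
  exact (occursAt_append_iff.mp hu).1

end Occurrences

section FirstOccurrenceRank

variable {β : Type*}

/-- `IsDerivedWord x u d` states `d n = firstOccRank r (r n)` for the return words `r n`. -/
noncomputable def firstOccRank (f : ℕ → β) (b : β) : ℕ :=
  (f '' {k | k < sInf {k | f k = b}}).ncard

theorem firstOccRank_apply_zero (f : ℕ → β) : firstOccRank f (f 0) = 0 := by
  have h0 : sInf {k | f k = f 0} = 0 := Nat.sInf_eq_zero.mpr (Or.inl rfl)
  simp [firstOccRank, h0]

theorem firstOccRank_lt_of_sInf_lt {f : ℕ → β} {b b' : β} (hb : b ∈ Set.range f)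
    (hlt : sInf {k | f k = b} < sInf {k | f k = b'}) : firstOccRank f b < firstOccRank f b' := by
  have hmem : f (sInf {k | f k = b}) = b := Nat.sInf_mem (s := {k | f k = b}) hb
  refine Set.ncard_lt_ncard ⟨Set.image_mono fun k hk => lt_trans hk hlt, fun hsub => ?_⟩
    ((Set.finite_Iio _).image f)
  obtain ⟨k, hk, hfk⟩ := hsub ⟨_, hlt, hmem⟩
  exact Nat.notMem_of_lt_sInf hk hfk

theorem firstOccRank_injOn (f : ℕ → β) : Set.InjOn (firstOccRank f) (Set.range f) := by
  intro b hb b' hb' h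
  rcases lt_trichotomy (sInf {k | f k = b}) (sInf {k | f k = b'}) with hlt | heq | hlt
  · exact absurd h (firstOccRank_lt_of_sInf_lt hb hlt).ne
  · rw [← Nat.sInf_mem (s := {k | f k = b}) hb, heq, Nat.sInf_mem (s := {k | f k = b'}) hb']
  · exact absurd h (firstOccRank_lt_of_sInf_lt hb' hlt).ne'

end FirstOccurrenceRank

section ReturnWords

variable {α : Type*} {a : α}

/-- `w = a u` with `a ∉ u`: `w a` is a complete first return to the letter `a`. -/
def IsReturnWord (a : α) (w : List α) : Prop := ∃ u, a ∉ u ∧ w = a :: u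

theorem occCount_singleton [DecidableEq α] (a : α) (w : List α) :
    occCount [a] w = w.count a := by
  have hset : {i | i + [a].length ≤ w.length ∧ (w.drop i).take [a].length = [a]}
      = ↑(w.findIdxs (· == a)).toFinset := by
    ext i
    simp only [List.length_singleton, Set.mem_ofPred_eq, Finset.mem_coe, List.mem_toFinset,
      List.mem_findIdxs_iff_exists_getElem_pos, beq_iff_eq]
    constructor
    · rintro ⟨hi, h⟩
      have hi' : i < w.length := by omega
      rw [List.take_one_drop_eq_of_lt_length hi'] at h
      exact ⟨hi', by simpa using h⟩
    · rintro ⟨hi, h⟩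
      rw [List.take_one_drop_eq_of_lt_length hi]
      exact ⟨by omega, by simpa using h⟩
  rw [occCount, hset, Set.ncard_coe_finset, List.toFinset_card_of_nodup List.nodup_findIdxs,
    List.length_findIdxs, List.count_eq_countP]

theorem isReturnWord_of_firstReturn {x : ℕ → α} {w : List α} (h : FirstReturn [a] x w) :
    IsReturnWord a w := by
  classical
  obtain ⟨-, -, hpre, hcount⟩ := h
  rw [occCount_singleton] at hcount
  cases w with
  | nil => simp at hcount
  | cons b u =>
    obtain rfl : a = b := by simpa using hpre
    refine ⟨u, List.count_eq_zero.mp ?_, rfl⟩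
    simp only [List.cons_append, List.count_cons_self, List.count_append] at hcount
    omega

theorem IsReturnWord.ne_nil {w : List α} (hw : IsReturnWord a w) : w ≠ [] := by
  obtain ⟨u, -, rfl⟩ := hw
  simp

theorem IsReturnWord.not_mem_of_append {v k : List α} (hw : IsReturnWord a (v ++ k))
    (hv : v ≠ []) : a ∉ k := by
  obtain ⟨u, hau, hvk⟩ := hw
  obtain ⟨b, v', rfl⟩ := List.exists_cons_of_ne_nil hv
  rw [List.cons_append, List.cons.injEq] at hvk
  exact fun hk => hau (hvk.2 ▸ List.mem_append_right v' hk)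

theorem exists_flatten_eq_cons {l : List (List α)} (hl : ∀ w ∈ l, IsReturnWord a w)
    (hne : l ≠ []) : ∃ t, l.flatten = a :: t := by
  obtain ⟨w, l', rfl⟩ := List.exists_cons_of_ne_nil hne
  obtain ⟨u, -, rfl⟩ := hl w List.mem_cons_self
  exact ⟨u ++ l'.flatten, rfl⟩

theorem eq_of_mem_head?_flatten {l : List (List α)} (hl : ∀ w ∈ l, IsReturnWord a w) :
    ∀ b ∈ l.flatten.head?, b = a := by
  intro b hb
  by_cases hne : l = []
  · simp [hne] at hb
  · obtain ⟨t, ht⟩ := exists_flatten_eq_cons hl hne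
    simpa [ht] using hb.symm

theorem IsReturnWord.eq_of_append_eq_append {w₁ w₂ f₁ f₂ : List α} (hw₁ : IsReturnWord a w₁)
    (hw₂ : IsReturnWord a w₂) (hf₁ : ∀ b ∈ f₁.head?, b = a) (hf₂ : ∀ b ∈ f₂.head?, b = a)
    (h : w₁ ++ f₁ = w₂ ++ f₂) : w₁ = w₂ := by
  wlog hle : w₁.length ≤ w₂.length generalizing w₁ w₂ f₁ f₂
  · exact (this hw₂ hw₁ hf₂ hf₁ h.symm (by omega)).symm
  obtain ⟨k, rfl, rfl⟩ | ⟨k, rfl, rfl⟩ := List.append_eq_append_iff.mp h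
  · rcases k with _ | ⟨b, k'⟩
    · simp
    · have hb : b = a := hf₁ b (by simp)
      exact absurd (hb ▸ List.mem_cons_self) (hw₂.not_mem_of_append hw₁.ne_nil)
  · simpa using hle

theorem flatten_inj_of_isReturnWord {l₁ l₂ : List (List α)} (hl₁ : ∀ w ∈ l₁, IsReturnWord a w)
    (hl₂ : ∀ w ∈ l₂, IsReturnWord a w) (h : l₁.flatten = l₂.flatten) : l₁ = l₂ := by
  induction l₁ generalizing l₂ with
  | nil =>
    cases l₂ with
    | nil => rfl
    | cons w₂ l₂ =>
      obtain ⟨t, ht⟩ := exists_flatten_eq_cons hl₂ (List.cons_ne_nil w₂ l₂)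
      simp [ht] at h
  | cons w₁ l₁ ih =>
    cases l₂ with
    | nil =>
      obtain ⟨t, ht⟩ := exists_flatten_eq_cons hl₁ (List.cons_ne_nil w₁ l₁)
      simp [ht] at h
    | cons w₂ l₂ =>
      have hl₁' : ∀ w ∈ l₁, IsReturnWord a w := fun w hw => hl₁ w (List.mem_cons_of_mem _ hw)
      have hl₂' : ∀ w ∈ l₂, IsReturnWord a w := fun w hw => hl₂ w (List.mem_cons_of_mem _ hw)
      rw [List.flatten_cons, List.flatten_cons] at h
      obtain rfl := (hl₁ w₁ List.mem_cons_self).eq_of_append_eq_append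
        (hl₂ w₂ List.mem_cons_self) (eq_of_mem_head?_flatten hl₁')
        (eq_of_mem_head?_flatten hl₂') h
      rw [ih hl₁' hl₂' (List.append_cancel_left h)]

end ReturnWords

section ReturnWordFactorizations

variable {α : Type*} {a : α}

theorem exists_eq_drop_flatten_of_suffix {l : List (List α)} (hl : ∀ w ∈ l, IsReturnWord a w)
    {p : List α} (hp : p <:+ l.flatten ++ [a]) (ha : p.head? = some a) :
    ∃ t, p = (l.drop t).flatten ++ [a] := by
  induction l with
  | nil =>
    rcases List.suffix_cons_iff.mp hp with rfl | hp
    · exact ⟨0, rfl⟩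
    · simp [List.suffix_nil.mp hp] at ha
  | cons w l ih =>
    obtain ⟨s, hs⟩ := hp
    rw [List.flatten_cons, List.append_assoc] at hs
    obtain ⟨k, rfl, rfl⟩ | ⟨k, rfl, hk⟩ := List.append_eq_append_iff.mp hs
    · rcases s with _ | ⟨b, s⟩
      · exact ⟨0, by simp⟩
      · rcases k with _ | ⟨b', k⟩
        · exact ⟨1, by simp⟩
        · obtain rfl : b' = a := by simpa using ha
          exact absurd List.mem_cons_self
            ((hl _ List.mem_cons_self).not_mem_of_append (List.cons_ne_nil b s))
    · obtain ⟨t, ht⟩ := ih (fun w hw => hl w (List.mem_cons_of_mem _ hw)) ⟨k, hk.symm⟩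
      exact ⟨t + 1, by simpa using ht⟩

theorem reverse_flatten_append_singleton {l : List (List α)}
    (hl : ∀ w ∈ l, IsPalindrome (w ++ [a])) :
    (l.flatten ++ [a]).reverse = l.reverse.flatten ++ [a] := by
  induction l with
  | nil => rfl
  | cons w l ih =>
    have hw : a :: w.reverse = w ++ [a] := by simpa [IsPalindrome] using hl w List.mem_cons_self
    simp [ih fun v hv => hl v (List.mem_cons_of_mem _ hv), ← hw]

theorem flatten_append_singleton_infix_of_infix_dropLast {l m : List (List α)}
    (hl : ∀ w ∈ l, IsReturnWord a w) (hne : l ≠ []) (hm : m <:+: l.dropLast) :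
    m.flatten ++ [a] <:+: l.flatten := by
  obtain ⟨s, u, hsu⟩ := hm
  have hu : ∀ w ∈ u ++ [l.getLast hne], IsReturnWord a w := by
    intro w hw
    rcases List.mem_append.mp hw with hw | hw
    · exact hl w (List.mem_of_mem_dropLast (hsu ▸ List.mem_append_right _ hw))
    · exact (List.mem_singleton.mp hw) ▸ hl _ (List.getLast_mem hne)
  obtain ⟨rest, hrest⟩ := exists_flatten_eq_cons hu (by simp)
  refine ⟨s.flatten, rest, ?_⟩
  rw [← List.dropLast_concat_getLast hne, ← hsu]
  simp only [List.append_assoc, List.flatten_append] at hrest ⊢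
  rw [hrest]
  rfl

theorem exists_isPalindrome_drop_of_hasUnioccurrentPalSuffix {l : List (List α)}
    (hl : ∀ w ∈ l, IsReturnWord a w) (hne : l ≠ [])
    (h : HasUnioccurrentPalSuffix (l.flatten ++ [a])) :
    ∃ t < l.length, IsPalindrome ((l.drop t).flatten ++ [a]) ∧
      ¬ (l.drop t).flatten ++ [a] <:+: l.flatten := by
  obtain ⟨p, hp, hps, hpd⟩ := h
  rw [List.dropLast_concat] at hpd
  have ha : p.head? = some a := by
    rcases List.suffix_concat_iff.mp hps with rfl | ⟨q, rfl, -⟩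
    · exact absurd List.nil_infix hpd
    · rw [hp.head?_eq_getLast?, List.getLast?_concat]
  obtain ⟨t, rfl⟩ := exists_eq_drop_flatten_of_suffix hl hps ha
  refine ⟨t, ?_, hp, hpd⟩
  by_contra hle
  obtain ⟨u, hu⟩ := exists_flatten_eq_cons hl hne
  rw [List.drop_eq_nil_of_le (by omega), hu] at hpd
  exact hpd ⟨[], u, rfl⟩

theorem IsReturnWord.isPalindrome_of_hasUnioccurrentPalSuffix {w : List α}
    (hw : IsReturnWord a w) (h : HasUnioccurrentPalSuffix (w ++ [a])) :
    IsPalindrome (w ++ [a]) := by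
  obtain ⟨t, ht, hpal, -⟩ := exists_isPalindrome_drop_of_hasUnioccurrentPalSuffix (l := [w])
    (by simpa using hw) (List.cons_ne_nil _ _) (by simpa using h)
  obtain rfl : t = 0 := by simpa using ht
  simpa using hpal

theorem hasUnioccurrentPalSuffix_map {β : Type*} {l : List (List α)}
    (hl : ∀ w ∈ l, IsReturnWord a w) (hpal : ∀ w ∈ l, IsPalindrome (w ++ [a])) (hne : l ≠ [])
    {c : List α → β} (hc : Set.InjOn c {w | w ∈ l})
    (h : HasUnioccurrentPalSuffix (l.flatten ++ [a])) : HasUnioccurrentPalSuffix (l.map c) := by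
  obtain ⟨t, -, hpal_t, hnot⟩ := exists_isPalindrome_drop_of_hasUnioccurrentPalSuffix hl hne h
  set m := l.drop t
  have hm : ∀ w ∈ m, w ∈ l := fun w hw => List.mem_of_mem_drop hw
  have hrev : m.reverse = m := by
    refine flatten_inj_of_isReturnWord (fun w hw => hl w (hm w (List.mem_reverse.mp hw)))
      (fun w hw => hl w (hm w hw)) (List.append_cancel_right (bs := [a]) ?_)
    rw [← reverse_flatten_append_singleton (fun w hw => hpal w (hm w hw))]
    exact hpal_t
  have hdecode : ∀ k : List (List α), (∀ w ∈ k, w ∈ l) →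
      (k.map c).map (Function.invFunOn c {w | w ∈ l}) = k := fun k hk => by
    rw [List.map_map]
    exact (List.map_congr_left fun w hw => hc.leftInvOn_invFunOn (hk w hw)).trans (List.map_id' k)
  refine ⟨m.map c, by simp [IsPalindrome, ← List.map_reverse, hrev], ?_, fun hinf => ?_⟩
  · exact List.map_drop ▸ List.drop_suffix t (l.map c)
  · rw [← List.map_dropLast] at hinf
    have hinf' := hinf.map (Function.invFunOn c {w | w ∈ l})
    rw [hdecode m hm, hdecode l.dropLast fun w hw => List.mem_of_mem_dropLast hw] at hinf'
    exact hnot (flatten_append_singleton_infix_of_infix_dropLast hl hne hinf')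

end ReturnWordFactorizations

section DerivedWords

variable {α β : Type*} {a : α} {x : ℕ → α} {r : ℕ → List α}

theorem occursAt_flatten_factorAt (hret : ∀ n, IsReturnWord a (r n))
    (hocc : ∀ n, OccursAt (r n ++ [a]) x (∑ k ∈ Finset.range n, (r k).length)) (i L : ℕ) :
    OccursAt ((factorAt r i L).flatten ++ [a]) x (∑ k ∈ Finset.range i, (r k).length) := by
  induction L generalizing i with
  | zero =>
    obtain ⟨u, -, hu⟩ := hret i
    exact (hocc i).of_prefix (by simp [hu, factorAt])
  | succ L ih =>
    rw [factorAt_succ, List.flatten_cons, List.append_assoc, occursAt_append_iff,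
      ← Finset.sum_range_succ]
    exact ⟨(hocc i).of_prefix (List.prefix_append _ _), ih (i + 1)⟩

theorem hasUnioccurrentPalSuffix_of_isFactor (hrich : RichWord x)
    (hret : ∀ n, IsReturnWord a (r n)) (hpal : ∀ n, IsPalindrome (r n ++ [a]))
    (hocc : ∀ n, OccursAt (r n ++ [a]) x (∑ k ∈ Finset.range n, (r k).length))
    {c : List α → β} (hc : Set.InjOn c (Set.range r)) {v : List β} (hv : v ≠ [])
    (hvc : IsFactor v (c ∘ r)) : HasUnioccurrentPalSuffix v := by
  obtain ⟨i, hi⟩ := hvc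
  have hl : ∀ w ∈ factorAt r i v.length, w ∈ Set.range r := by
    intro w hw
    obtain ⟨k, -, rfl⟩ := List.mem_map.mp hw
    exact ⟨i + k, rfl⟩
  have hne : factorAt r i v.length ≠ [] := by simpa [factorAt] using hv
  have hrich_l := hrich _ ⟨_, occursAt_flatten_factorAt hret hocc i v.length⟩
  rw [← occursAt_iff_factorAt.mp hi, factorAt_comp]
  exact hasUnioccurrentPalSuffix_map (fun w hw => (hl w hw).choose_spec ▸ hret _)
    (fun w hw => (hl w hw).choose_spec ▸ hpal _) hne (hc.mono hl)
    (richList_append_singleton_iff.mp hrich_l).2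

end DerivedWords

theorem derivedWord_of_rich_is_rich_general {A : Type*} (y : ℕ → A)
    (hr : RichWord y) (d : ℕ → ℕ)
    (hd : IsDerivedWord y [y 0] d) :
    RichWord d ∧ d 0 = 0 := by
  obtain ⟨r, hfr, hocc, hcode⟩ := hd
  obtain rfl : d = firstOccRank r ∘ r := funext hcode
  have hret : ∀ n, IsReturnWord (y 0) (r n) := fun n => isReturnWord_of_firstReturn (hfr n)
  have hpal : ∀ n, IsPalindrome (r n ++ [y 0]) := fun n =>
    (hret n).isPalindrome_of_hasUnioccurrentPalSuffix
      (richList_append_singleton_iff.mp (hr _ (hfr n).2.1)).2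
  refine ⟨fun u ⟨i, hi⟩ => richList_of_forall_prefix fun p hp hpu => ?_, firstOccRank_apply_zero r⟩
  exact hasUnioccurrentPalSuffix_of_isFactor hr hret hpal hocc (firstOccRank_injOn r) hp
    ⟨i, hi.of_prefix hpu⟩

/-- The derived word of a rich uniformly recurrent word `y` at the prefix
consisting of its first letter is rich and begins in the letter `0` of the derived
alphabet. -/
theorem derivedWord_of_rich_is_rich {A : Type*} [Fintype A] (y : ℕ → A)
    (hr : RichWord y) (hur : UniformlyRecurrent y) (d : ℕ → ℕ)
    (hd : IsDerivedWord y [y 0] d) :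
    RichWord d ∧ d 0 = 0 :=
  derivedWord_of_rich_is_rich_general y hr d hd
end

section
/- Let y be a primitive morphic infinite word beginning in the letter 0. Then the derived word D_0(y) of y at the prefix 0 is primitive morphic. -/
open List

/-!
Write `y = f(x)` with `x` a fixed point of a primitive substitution `τ`. A power `G` of `τ`
maps every letter to a word containing all letters, so `x 0` occurs in `x` with bounded gaps
and `x` has finitely many return words to `x 0`. For any non-erasing `h` with `y = h(x)`, the
word `h(x 0)` begins with `y 0`, so `h` maps each return word of `x` onto a concatenation of
return words of `y`; since both words are cut exactly at the occurrences of their first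
letters, this block depends only on the return word of `x` we started from. Hence every
letter-wise function of the return words of `y` (such as `D_{y 0}(y)`) is a morphic image of
the derived word `D_{x 0}(x)`. Applied to `h = H = G^k` and `y = x`, it shows that `D_{x 0}(x)`
is fixed by an induced substitution, which is primitive as soon as `H(x 0)` is a prefix of `x`
long enough to contain a first occurrence of every return word.
-/

section

variable {A B W : Type*}

def chunk (z : ℕ → A) (s t : ℕ) : List A := (List.range (t - s)).map fun i => z (s + i)

@[simp] lemma length_chunk (z : ℕ → A) (s t : ℕ) : (chunk z s t).length = t - s := by
  simp [chunk]

lemma chunk_singleton (z : ℕ → A) (s : ℕ) : chunk z s (s + 1) = [z s] := by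
  simp [chunk]

lemma mem_chunk {z : ℕ → A} {s t : ℕ} {a : A} : a ∈ chunk z s t ↔ ∃ i < t - s, z (s + i) = a := by
  simp [chunk]

lemma chunk_eq_chunk_iff {z w : ℕ → A} {s t s' t' : ℕ} :
    chunk z s t = chunk w s' t' ↔ t - s = t' - s' ∧ ∀ i < t - s, z (s + i) = w (s' + i) := by
  constructor
  · intro h
    have hl : t - s = t' - s' := by simpa using congrArg List.length h
    refine ⟨hl, fun i hi => ?_⟩
    simpa [chunk] using List.getElem_of_eq h (by simpa using hi)
  · rintro ⟨hl, h⟩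
    refine List.ext_getElem (by simpa using hl) fun i hi _ => ?_
    simp only [chunk, List.getElem_map, List.getElem_range]
    exact h i (by simpa using hi)

lemma chunk_append (z : ℕ → A) {s t u : ℕ} (hst : s ≤ t) (htu : t ≤ u) :
    chunk z s t ++ chunk z t u = chunk z s u := by
  rw [chunk, chunk, chunk, show u - s = (t - s) + (u - t) by omega, List.range_add,
    List.map_append, List.map_map]
  congr 1
  exact List.map_congr_left fun i _ => by simp only [Function.comp_apply]; congr 1; omega

lemma chunk_succ (z : ℕ → A) {s t : ℕ} (hst : s ≤ t) :
    chunk z s (t + 1) = chunk z s t ++ [z t] := by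
  rw [← chunk_singleton, chunk_append z hst t.le_succ]

lemma wordTake_eq_chunk (z : ℕ → A) (n : ℕ) : wordTake z n = chunk z 0 n := by
  simp [wordTake, chunk]

lemma occursAt_iff_chunk (u : List A) (z : ℕ → A) (i : ℕ) :
    OccursAt u z i ↔ chunk z i (i + u.length) = u := by
  simp [OccursAt, chunk]

@[simp] lemma listApply_append_s8 (h : A → List B) (w v : List A) :
    listApply h (w ++ v) = listApply h w ++ listApply h v := by
  simp [listApply]

@[simp] lemma listApply_singleton (h : A → List B) (a : A) : listApply h [a] = h a := by
  simp [listApply]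

lemma mul_length_le_length_listApply {h : A → List B} {k : ℕ} (hk : ∀ a, k ≤ (h a).length)
    (w : List A) : k * w.length ≤ (listApply h w).length := by
  induction w with
  | nil => simp
  | cons a w ih =>
    rw [← List.singleton_append, listApply_append_s8, listApply_singleton]
    simp only [List.length_append, List.length_singleton]
    linarith [hk a]

lemma length_le_length_listApply {h : A → List B} (hh : NonErasing h) (w : List A) :
    w.length ≤ (listApply h w).length := by
  simpa using mul_length_le_length_listApply (fun a => List.length_pos_iff.mpr (hh a)) w

def substPow (τ : A → List A) (n : ℕ) (a : A) : List A := (listApply τ)^[n] [a]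

lemma substPow_succ (τ : A → List A) (n : ℕ) (a : A) :
    substPow τ (n + 1) a = listApply τ (substPow τ n a) :=
  Function.iterate_succ_apply' _ _ _

lemma listApply_substPow (τ : A → List A) (n : ℕ) (w : List A) :
    listApply (substPow τ n) w = (listApply τ)^[n] w := by
  induction n generalizing w with
  | zero => simp [listApply, show substPow τ 0 = fun a => [a] from rfl]
  | succ n ih =>
    rw [funext (substPow_succ τ n), Function.iterate_succ_apply', ← ih]
    simp [listApply, List.flatMap_assoc]

lemma nonErasing_substPow {τ : A → List A} (hτ : NonErasing τ) (n : ℕ) :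
    NonErasing (substPow τ n) := by
  intro a
  induction n with
  | zero => simp [substPow]
  | succ n ih =>
    rw [substPow_succ, ← List.length_pos_iff]
    exact lt_of_lt_of_le (List.length_pos_iff.mpr ih) (length_le_length_listApply hτ _)

lemma IsMorphicImage.substPow {τ : A → List A} {x : ℕ → A} (hx : IsMorphicImage τ x x)
    (n : ℕ) : IsMorphicImage (substPow τ n) x x := by
  induction n with
  | zero => exact fun k => ⟨k, by rw [listApply_substPow]; rfl⟩
  | succ n ih =>
    intro k
    obtain ⟨m, hm⟩ := ih k
    obtain ⟨l, hl⟩ := hx m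
    refine ⟨l, ?_⟩
    rw [listApply_substPow, Function.iterate_succ_apply', ← listApply_substPow, hm, hl]

lemma mem_substPow {τ : A → List A} (hτ : NonErasing τ) (hall : ∀ a b, b ∈ τ a) {n : ℕ}
    (hn : n ≠ 0) (a b : A) : b ∈ substPow τ n a := by
  obtain ⟨n, rfl⟩ := Nat.exists_eq_succ_of_ne_zero hn
  obtain ⟨c, hc⟩ := List.exists_mem_of_ne_nil _ (nonErasing_substPow hτ n a)
  rw [substPow_succ, listApply, List.mem_flatMap]
  exact ⟨c, hc, hall c b⟩

lemma two_pow_le_length_substPow {τ : A → List A} (h2 : ∀ a, 2 ≤ (τ a).length) (n : ℕ)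
    (a : A) : 2 ^ n ≤ (substPow τ n a).length := by
  induction n with
  | zero => simp [substPow]
  | succ n ih =>
    rw [substPow_succ, pow_succ']
    exact le_trans (Nat.mul_le_mul_left 2 ih) (mul_length_le_length_listApply h2 _)

lemma StrictMono.exists_le_lt_succ {f : ℕ → ℕ} (hf : StrictMono f) {t : ℕ} (ht : f 0 ≤ t) :
    ∃ k, f k ≤ t ∧ t < f (k + 1) := by
  classical
  have hex : ∃ k, t < f (k + 1) := ⟨t, lt_of_lt_of_le t.lt_succ_self hf.le_apply⟩
  refine ⟨Nat.find hex, ?_, Nat.find_spec hex⟩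
  rcases Nat.eq_zero_or_eq_succ_pred (Nat.find hex) with h0 | hsucc
  · rwa [h0]
  · rw [hsucc]
    exact not_lt.mp (Nat.find_min hex (by omega))

def imageLength (h : A → List B) (x : ℕ → A) (k : ℕ) : ℕ := (listApply h (wordTake x k)).length

lemma imageLength_zero (h : A → List B) (x : ℕ → A) : imageLength h x 0 = 0 := by
  simp [imageLength, wordTake, listApply]

lemma imageLength_succ (h : A → List B) (x : ℕ → A) (k : ℕ) :
    imageLength h x (k + 1) = imageLength h x k + (h (x k)).length := by
  simp [imageLength, wordTake, List.range_succ]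

lemma imageLength_strictMono {h : A → List B} (hh : NonErasing h) (x : ℕ → A) :
    StrictMono (imageLength h x) :=
  strictMono_nat_of_lt_succ fun k => by
    rw [imageLength_succ]
    linarith [List.length_pos_iff.mpr (hh (x k))]

lemma imageLength_mono (h : A → List B) (x : ℕ → A) : Monotone (imageLength h x) :=
  monotone_nat_of_le_succ fun k => by rw [imageLength_succ]; omega

section MorphicImage

variable {h : A → List B} {x : ℕ → A} {y : ℕ → B}

lemma IsMorphicImage.listApply_chunk_zero (H : IsMorphicImage h x y) (k : ℕ) :
    listApply h (chunk x 0 k) = chunk y 0 (imageLength h x k) := by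
  obtain ⟨n, hn⟩ := H k
  have hlen : imageLength h x k = n := by
    rw [imageLength, hn, wordTake, List.length_map, List.length_range]
  rwa [hlen, ← wordTake_eq_chunk, ← wordTake_eq_chunk]

lemma IsMorphicImage.listApply_chunk (H : IsMorphicImage h x y) {s t : ℕ} (hst : s ≤ t) :
    listApply h (chunk x s t) = chunk y (imageLength h x s) (imageLength h x t) := by
  have hy := chunk_append y (Nat.zero_le _) (imageLength_mono h x hst)
  rw [← H.listApply_chunk_zero, ← H.listApply_chunk_zero, ← chunk_append x s.zero_le hst,
    listApply_append_s8] at hy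
  exact List.append_cancel_left hy.symm

lemma IsMorphicImage.chunk_imageLength (H : IsMorphicImage h x y) {k : ℕ} (hk : x k = x 0) :
    chunk y (imageLength h x k) (imageLength h x (k + 1)) = chunk y 0 (h (x 0)).length := by
  have h₁ := H.listApply_chunk_zero 1
  rw [show chunk x 0 1 = [x 0] from chunk_singleton x 0, listApply_singleton, imageLength_succ,
    imageLength_zero, zero_add] at h₁
  rw [← H.listApply_chunk k.le_succ, chunk_singleton, hk, listApply_singleton]
  exact h₁

lemma IsMorphicImage.apply_imageLength (H : IsMorphicImage h x y) (hh : NonErasing h) {k : ℕ}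
    (hk : x k = x 0) : y (imageLength h x k) = y 0 := by
  simpa using (chunk_eq_chunk_iff.mp (H.chunk_imageLength hk)).2 0
    (by rw [imageLength_succ, hk]; simpa using List.length_pos_iff.mpr (hh (x 0)))

end MorphicImage

lemma PurePrimitiveMorphic.exists_substitution {x : ℕ → A} (hx : PurePrimitiveMorphic x) :
    ∃ G : A → List A, NonErasing G ∧ (∀ a b, b ∈ G a) ∧ IsMorphicImage G x x := by
  obtain ⟨τ, hτ, ⟨N, -, hN⟩, hτx⟩ := hx
  exact ⟨substPow τ N, nonErasing_substPow hτ N, hN, hτx.substPow N⟩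

lemma exists_substitution_long_image {G : A → List A} {x : ℕ → A} (hG : NonErasing G)
    (hall : ∀ a b, b ∈ G a) (hGx : IsMorphicImage G x x) {m : ℕ} (hm : x m ≠ x 0) (K : ℕ) :
    ∃ H : A → List A, NonErasing H ∧ (∀ a b, b ∈ H a) ∧ IsMorphicImage H x x ∧
      K ≤ (H (x 0)).length := by
  classical
  have h2 : ∀ a, 2 ≤ (G a).length := fun a =>
    calc 2 = ({x m, x 0} : Finset A).card := (Finset.card_pair hm).symm
      _ ≤ (G a).toFinset.card := Finset.card_le_card (by simp [Finset.insert_subset_iff, hall])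
      _ ≤ (G a).length := List.toFinset_card_le _
  refine ⟨substPow G (K + 1), nonErasing_substPow hG _, mem_substPow hG hall K.succ_ne_zero,
    hGx.substPow _, ?_⟩
  exact le_trans (Nat.lt_two_pow_self).le
    (le_trans (Nat.pow_le_pow_right two_pos K.le_succ) (two_pow_le_length_substPow h2 _ _))

lemma purePrimitiveMorphic_of_subsingleton {C : Type*} [Subsingleton C] (c : ℕ → C) :
    PurePrimitiveMorphic c :=
  ⟨fun a => [a], fun _ => List.cons_ne_nil _ _,
    ⟨1, le_rfl, fun a b => by simp [Subsingleton.elim a b, listApply]⟩,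
    fun k => ⟨k, by simp [listApply]⟩⟩

structure OccurrenceEnum (z : ℕ → A) (P : ℕ → ℕ) : Prop where
  zero : P 0 = 0
  strictMono : StrictMono P
  apply_eq : ∀ n, z (P n) = z 0
  exists_eq : ∀ m, z m = z 0 → ∃ n, P n = m

def returnWord (z : ℕ → A) (P : ℕ → ℕ) (n : ℕ) : List A := chunk z (P n) (P (n + 1))

namespace OccurrenceEnum

variable {z : ℕ → A} {P : ℕ → ℕ}

lemma of_not_between (zero : P 0 = 0) (strictMono : StrictMono P) (apply_eq : ∀ n, z (P n) = z 0)
    (not_between : ∀ n m, P n < m → m < P (n + 1) → z m ≠ z 0) : OccurrenceEnum z P := by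
  refine ⟨zero, strictMono, apply_eq, fun m hm => ?_⟩
  obtain ⟨n, hle, hlt⟩ := strictMono.exists_le_lt_succ (zero ▸ m.zero_le)
  rcases hle.eq_or_lt with heq | hlt'
  · exact ⟨n, heq⟩
  · exact absurd hm (not_between n m hlt' hlt)

variable (hE : OccurrenceEnum z P)
include hE

lemma not_between {n m : ℕ} (h₁ : P n < m) (h₂ : m < P (n + 1)) : z m ≠ z 0 := by
  rintro hm
  obtain ⟨k, rfl⟩ := hE.exists_eq m hm
  have := hE.strictMono.lt_iff_lt.mp h₁
  have := hE.strictMono.lt_iff_lt.mp h₂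
  omega

lemma succ_le {n q : ℕ} (hq : P n < q) (hzq : z q = z 0) : P (n + 1) ≤ q := by
  obtain ⟨k, rfl⟩ := hE.exists_eq q hzq
  exact hE.strictMono.monotone (hE.strictMono.lt_iff_lt.mp hq)

/-- If the complete return word `returnWord z P m ++ [z 0]` is read at the occurrence `P n`,
it is the complete return word at `n`. -/
lemma returnWord_eq_of_agree {n m : ℕ}
    (hw : ∀ i ≤ P (m + 1) - P m, z (P n + i) = z (P m + i)) :
    P (n + 1) = P n + (P (m + 1) - P m) ∧ returnWord z P n = returnWord z P m := by
  have hm := hE.strictMono (Nat.lt_add_one m)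
  have hn := hE.strictMono (Nat.lt_add_one n)
  have hend : z (P n + (P (m + 1) - P m)) = z 0 := by
    rw [hw _ le_rfl, Nat.add_sub_cancel' hm.le, hE.apply_eq]
  have hsucc : P (n + 1) = P n + (P (m + 1) - P m) := by
    refine le_antisymm (hE.succ_le (by omega) hend) (not_lt.mp fun hlt => ?_)
    refine hE.not_between (n := m) (m := P m + (P (n + 1) - P n)) (by omega) (by omega) ?_
    rw [← hw _ (by omega), Nat.add_sub_cancel' hn.le, hE.apply_eq]
  refine ⟨hsucc, chunk_eq_chunk_iff.mpr ⟨by omega, fun i hi => hw i (by omega)⟩⟩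

lemma exists_returnWord_eq {t j : ℕ} (hw : ∀ i ≤ P (j + 1) - P j, z (t + i) = z (P j + i)) :
    ∃ a, P a = t ∧ P (a + 1) = t + (P (j + 1) - P j) ∧ returnWord z P a = returnWord z P j := by
  obtain ⟨a, rfl⟩ := hE.exists_eq t (by simpa [hE.apply_eq] using hw 0 (Nat.zero_le _))
  exact ⟨a, rfl, hE.returnWord_eq_of_agree hw⟩

lemma returnWord_add_eq_of_agree {a b ℓ i : ℕ} (hagree : ∀ o ≤ ℓ, z (P b + o) = z (P a + o))
    (hoff : P (b + i) = P b + (P (a + i) - P a)) (hi : P (a + i + 1) ≤ P a + ℓ) :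
    P (b + i + 1) = P b + (P (a + i + 1) - P a) ∧
      returnWord z P (b + i) = returnWord z P (a + i) := by
  have h₁ := hE.strictMono.monotone (Nat.le_add_right a i)
  have h₂ := hE.strictMono (Nat.lt_add_one (a + i))
  obtain ⟨hnext, hret⟩ := hE.returnWord_eq_of_agree (n := b + i) (m := a + i) fun k hk => by
    rw [hoff, add_assoc, hagree _ (by omega), ← add_assoc, Nat.add_sub_cancel' h₁]
  exact ⟨by omega, hret⟩

lemma offset_eq_of_agree {a b ℓ : ℕ} (hagree : ∀ o ≤ ℓ, z (P b + o) = z (P a + o)) :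
    ∀ i, P (a + i) ≤ P a + ℓ → P (b + i) = P b + (P (a + i) - P a) := by
  intro i
  induction i with
  | zero => simp
  | succ i ih =>
    intro hi
    rw [← add_assoc] at hi ⊢
    have := hE.strictMono (Nat.lt_add_one (a + i))
    exact (hE.returnWord_add_eq_of_agree hagree (ih (by omega)) hi).1

lemma returnWord_eq_of_chunk_eq {a a' b b' : ℕ} (ha : a ≤ a') (hb : b ≤ b')
    (hw : chunk z (P a) (P a') = chunk z (P b) (P b')) :
    a' - a = b' - b ∧ ∀ i, a + i < a' → returnWord z P (a + i) = returnWord z P (b + i) := by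
  have hPa := hE.strictMono.monotone ha
  have hPb := hE.strictMono.monotone hb
  obtain ⟨hℓ, hw⟩ := chunk_eq_chunk_iff.mp hw
  have hagree : ∀ o ≤ P a' - P a, z (P b + o) = z (P a + o) := by
    intro o ho
    rcases ho.lt_or_eq with ho | ho
    · exact (hw o ho).symm
    · rw [ho, Nat.add_sub_cancel' hPa, hℓ, Nat.add_sub_cancel' hPb, hE.apply_eq, hE.apply_eq]
  have hoff := hE.offset_eq_of_agree hagree
  have hend : b + (a' - a) = b' := hE.strictMono.injective <| by
    rw [hoff _ (by rw [Nat.add_sub_cancel' ha]; omega), Nat.add_sub_cancel' ha]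
    omega
  refine ⟨by omega, fun i hi => ?_⟩
  have := hE.strictMono.monotone (show a + i + 1 ≤ a' by omega)
  have := hE.strictMono (Nat.lt_add_one (a + i))
  exact (hE.returnWord_add_eq_of_agree hagree (hoff i (by omega)) (by omega)).2.symm

lemma returnWord_eq_of_forall_eq (hz : ∀ m, z m = z 0) (n : ℕ) : returnWord z P n = [z 0] := by
  have hsucc : P (n + 1) = P n + 1 :=
    le_antisymm (hE.succ_le (Nat.lt_add_one _) (hz _)) (hE.strictMono (Nat.lt_add_one n))
  rw [returnWord, hsucc, chunk_singleton, hE.apply_eq]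

lemma exists_returnWord_eq_of_agree_prefix {s s' j L : ℕ} (hjL : P (j + 1) < L)
    (hL : P s + L ≤ P s') (hagree : ∀ i < L, z (P s + i) = z i) :
    ∃ a, s ≤ a ∧ a < s' ∧ returnWord z P a = returnWord z P j := by
  obtain ⟨a, ha, ha', hret⟩ := hE.exists_returnWord_eq (t := P s + P j) (j := j) fun i hi => by
    have := hE.strictMono (Nat.lt_add_one j)
    rw [add_assoc, hagree _ (by omega)]
  refine ⟨a, hE.strictMono.le_iff_le.mp (by omega), ?_, hret⟩
  have := hE.strictMono (Nat.lt_add_one j)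
  exact hE.strictMono.lt_iff_lt.mp (by omega)

end OccurrenceEnum

lemma exists_occurrenceEnum_of_forall_exists_gt {z : ℕ → A} (h : ∀ t, ∃ q, t < q ∧ z q = z 0) :
    ∃ P, OccurrenceEnum z P := by
  classical
  have hinf : {m | z m = z 0}.Infinite :=
    Set.infinite_of_forall_exists_gt fun t => (h t).imp fun _ ⟨hq, hzq⟩ => ⟨hzq, hq⟩
  exact ⟨Nat.nth (fun m => z m = z 0), Nat.nth_zero_of_zero rfl, Nat.nth_strictMono hinf,
    Nat.nth_mem_of_infinite hinf, fun m hm => ⟨_, Nat.nth_count hm⟩⟩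

lemma OccurrenceEnum.finite_range_returnWord [Finite A] {z : ℕ → A} {P : ℕ → ℕ}
    (hE : OccurrenceEnum z P) {L : ℕ} (hL : ∀ t, ∃ q, t < q ∧ q ≤ t + L ∧ z q = z 0) :
    (Set.range (returnWord z P)).Finite := by
  refine (List.finite_length_le A L).subset ?_
  rintro _ ⟨n, rfl⟩
  obtain ⟨q, hq₁, hq₂, hq⟩ := hL (P n)
  simpa [returnWord] using le_trans (Nat.sub_le_sub_right (hE.succ_le hq₁ hq) _) (by omega)

lemma exists_occurrence_gap_bound [Finite A] {G : A → List A} {x : ℕ → A} (hG : NonErasing G)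
    (hall : ∀ a b, b ∈ G a) (hGx : IsMorphicImage G x x) :
    ∃ L, ∀ t, ∃ q, t < q ∧ q ≤ t + L ∧ x q = x 0 := by
  obtain ⟨M, hM⟩ := (Set.finite_range fun a => (G a).length).bddAbove
  have hstep : ∀ k, imageLength G x (k + 1) ≤ imageLength G x k + M := fun k => by
    rw [imageLength_succ]
    exact Nat.add_le_add_left (hM ⟨x k, rfl⟩) _
  have hblock : ∀ k, ∃ q, imageLength G x k ≤ q ∧ q < imageLength G x (k + 1) ∧ x q = x 0 := by
    intro k
    have hmem : x 0 ∈ chunk x (imageLength G x k) (imageLength G x (k + 1)) := by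
      rw [← hGx.listApply_chunk k.le_succ, chunk_singleton, listApply_singleton]
      exact hall _ _
    obtain ⟨i, hi, hxi⟩ := mem_chunk.mp hmem
    exact ⟨_, Nat.le_add_right _ i, by omega, hxi⟩
  refine ⟨2 * M, fun t => ?_⟩
  obtain ⟨k, hk₁, hk₂⟩ :=
    (imageLength_strictMono hG x).exists_le_lt_succ (imageLength_zero G x ▸ t.zero_le)
  obtain ⟨q, hq₁, hq₂, hq⟩ := hblock (k + 1)
  exact ⟨q, by omega, by linarith [hstep k, hstep (k + 1)], hq⟩

lemma PurePrimitiveMorphic.exists_occurrenceEnum [Finite A] {x : ℕ → A}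
    (hx : PurePrimitiveMorphic x) :
    ∃ P, OccurrenceEnum x P ∧ (Set.range (returnWord x P)).Finite := by
  obtain ⟨G, hG, hall, hGx⟩ := hx.exists_substitution
  obtain ⟨L, hL⟩ := exists_occurrence_gap_bound hG hall hGx
  obtain ⟨P, hP⟩ := exists_occurrenceEnum_of_forall_exists_gt fun t =>
    (hL t).imp fun _ ⟨h₁, _, h₂⟩ => ⟨h₁, h₂⟩
  exact ⟨P, hP, hP.finite_range_returnWord hL⟩

section InducedMorphism

variable {h : A → List B} {x : ℕ → A} {y : ℕ → B} {p S : ℕ → ℕ}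

lemma exists_indexMap (hh : NonErasing h) (H : IsMorphicImage h x y) (hp : OccurrenceEnum x p)
    (hS : OccurrenceEnum y S) :
    ∃ Ψ : ℕ → ℕ, StrictMono Ψ ∧ Ψ 0 = 0 ∧ ∀ k, S (Ψ k) = imageLength h x (p k) := by
  choose Ψ hΨ using fun k => hS.exists_eq _ (H.apply_imageLength hh (hp.apply_eq k))
  refine ⟨Ψ, fun a b hab => hS.strictMono.lt_iff_lt.mp ?_, hS.strictMono.injective ?_, hΨ⟩
  · rw [hΨ, hΨ]
    exact imageLength_strictMono hh x (hp.strictMono hab)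
  · rw [hΨ, hp.zero, imageLength_zero, hS.zero]

lemma chunk_indexMap_eq (H : IsMorphicImage h x y) (hp : OccurrenceEnum x p)
    (hS : OccurrenceEnum y S) {Ψ : ℕ → ℕ} (hΨ : StrictMono Ψ)
    (hΨS : ∀ k, S (Ψ k) = imageLength h x (p k)) {e : ℕ → W}
    (he : ∀ m n, returnWord y S m = returnWord y S n → e m = e n) {m n : ℕ}
    (hmn : returnWord x p m = returnWord x p n) :
    chunk e (Ψ m) (Ψ (m + 1)) = chunk e (Ψ n) (Ψ (n + 1)) := by
  have hwin : ∀ k, chunk y (S (Ψ k)) (S (Ψ (k + 1))) = listApply h (returnWord x p k) :=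
    fun k => by rw [hΨS, hΨS, returnWord, H.listApply_chunk (hp.strictMono (Nat.lt_add_one k)).le]
  obtain ⟨hlen, hret⟩ := hS.returnWord_eq_of_chunk_eq (hΨ (Nat.lt_add_one m)).le
    (hΨ (Nat.lt_add_one n)).le (by rw [hwin, hwin, hmn])
  exact chunk_eq_chunk_iff.mpr ⟨hlen, fun i hi => he _ _ (hret i (by omega))⟩

/-- Sends the return word at `n` to `chunk e (Ψ n) (Ψ (n + 1))`, which under the hypotheses of
`chunk_indexMap_eq` does not depend on the choice of `n`. -/
noncomputable def inducedMorphism (x : ℕ → A) (p : ℕ → ℕ) (e : ℕ → W) (Ψ : ℕ → ℕ)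
    (c : Set.range (returnWord x p)) : List W :=
  chunk e (Ψ c.2.choose) (Ψ (c.2.choose + 1))

lemma nonErasing_inducedMorphism {e : ℕ → W} {Ψ : ℕ → ℕ} (hΨ : StrictMono Ψ) :
    NonErasing (inducedMorphism x p e Ψ) := fun c => by
  rw [inducedMorphism, ← List.length_pos_iff, length_chunk]
  exact Nat.sub_pos_of_lt (hΨ (Nat.lt_add_one _))

lemma exists_inducedMorphism (hh : NonErasing h) (H : IsMorphicImage h x y)
    (hp : OccurrenceEnum x p) (hS : OccurrenceEnum y S) {e : ℕ → W}
    (he : ∀ m n, returnWord y S m = returnWord y S n → e m = e n) :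
    ∃ Ψ : ℕ → ℕ, StrictMono Ψ ∧ Ψ 0 = 0 ∧ (∀ k, S (Ψ k) = imageLength h x (p k)) ∧
      ∀ n, inducedMorphism x p e Ψ (Set.rangeFactorization (returnWord x p) n) =
        chunk e (Ψ n) (Ψ (n + 1)) := by
  obtain ⟨Ψ, hΨ, hΨ0, hΨS⟩ := exists_indexMap hh H hp hS
  exact ⟨Ψ, hΨ, hΨ0, hΨS, fun n =>
    chunk_indexMap_eq H hp hS hΨ hΨS he (Set.rangeFactorization (returnWord x p) n).2.choose_spec⟩

end InducedMorphism

lemma isMorphicImage_of_blocks {C : Type*} {φ : C → List W} {c : ℕ → C} {e : ℕ → W}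
    {Ψ : ℕ → ℕ} (hΨ : Monotone Ψ) (hΨ0 : Ψ 0 = 0)
    (hblock : ∀ n, φ (c n) = chunk e (Ψ n) (Ψ (n + 1))) : IsMorphicImage φ c e := by
  intro k
  refine ⟨Ψ k, ?_⟩
  rw [wordTake_eq_chunk, wordTake_eq_chunk]
  induction k with
  | zero => simp [hΨ0, chunk, listApply]
  | succ k ih =>
    rw [chunk_succ c k.zero_le, listApply_append_s8, ih, listApply_singleton, hblock,
      chunk_append e (Nat.zero_le _) (hΨ k.le_succ)]

lemma exists_isMorphicImage_rangeFactorization {h : A → List B} {x : ℕ → A} {y : ℕ → B}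
    {p S : ℕ → ℕ} (hh : NonErasing h) (H : IsMorphicImage h x y) (hp : OccurrenceEnum x p)
    (hS : OccurrenceEnum y S) {e : ℕ → W}
    (he : ∀ m n, returnWord y S m = returnWord y S n → e m = e n) :
    ∃ φ : Set.range (returnWord x p) → List W,
      NonErasing φ ∧ IsMorphicImage φ (Set.rangeFactorization (returnWord x p)) e := by
  obtain ⟨Ψ, hΨ, hΨ0, -, hblock⟩ := exists_inducedMorphism hh H hp hS he
  exact ⟨_, nonErasing_inducedMorphism hΨ, isMorphicImage_of_blocks hΨ.monotone hΨ0 hblock⟩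

theorem PurePrimitiveMorphic.rangeFactorization_returnWord {x : ℕ → A}
    (hx : PurePrimitiveMorphic x) {p : ℕ → ℕ} (hp : OccurrenceEnum x p)
    (hfin : (Set.range (returnWord x p)).Finite) :
    PurePrimitiveMorphic (Set.rangeFactorization (returnWord x p)) := by
  obtain ⟨G, hG, hall, hGx⟩ := hx.exists_substitution
  by_cases hconst : ∀ m, x m = x 0
  · have : (Set.range (returnWord x p)).Subsingleton := by
      rintro _ ⟨m, rfl⟩ _ ⟨n, rfl⟩
      rw [hp.returnWord_eq_of_forall_eq hconst, hp.returnWord_eq_of_forall_eq hconst]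
    have := this.coe_sort
    exact purePrimitiveMorphic_of_subsingleton _
  obtain ⟨m, hm⟩ := not_forall.mp hconst
  have := hfin.to_subtype
  obtain ⟨K, hK⟩ :=
    (Set.finite_range fun c : Set.range (returnWord x p) => p (c.2.choose + 1)).bddAbove
  obtain ⟨H, hH, -, hHx, hHK⟩ := exists_substitution_long_image hG hall hGx hm (K + 1)
  obtain ⟨Φ, hΦ, hΦ0, hΦp, hblock⟩ := exists_inducedMorphism hH hHx hp hp
    (e := Set.rangeFactorization (returnWord x p)) fun _ _ hmn => Subtype.ext hmn
  refine ⟨_, nonErasing_inducedMorphism hΦ, ⟨1, le_rfl, fun a b => ?_⟩,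
    isMorphicImage_of_blocks hΦ.monotone hΦ0 hblock⟩
  obtain ⟨n, rfl⟩ := Set.rangeFactorization_surjective a
  rw [Function.iterate_one, listApply_singleton, hblock, mem_chunk]
  -- `H (returnWord x p n)` begins with `H (x 0)`, a prefix of `x` containing the first
  -- occurrence of `b`.
  have hagree : ∀ i < (H (x 0)).length, x (p (Φ n) + i) = x i := by
    have hwin := (chunk_eq_chunk_iff.mp (hHx.chunk_imageLength (hp.apply_eq n))).2
    rw [imageLength_succ, Nat.add_sub_cancel_left, hp.apply_eq] at hwin
    simpa [hΦp] using hwin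
  have hL : p (Φ n) + (H (x 0)).length ≤ p (Φ (n + 1)) := by
    rw [hΦp, hΦp, ← hp.apply_eq n, ← imageLength_succ]
    exact imageLength_mono H x (hp.strictMono (Nat.lt_add_one n))
  obtain ⟨a, ha, ha', hret⟩ := hp.exists_returnWord_eq_of_agree_prefix (j := b.2.choose)
    (by linarith [hK ⟨b, rfl⟩]) hL hagree
  refine ⟨a - Φ n, by omega, Subtype.ext ?_⟩
  rw [Nat.add_sub_cancel' ha, Set.rangeFactorization_coe, hret, b.2.choose_spec]

lemma occCount_singleton_s8 (b : A) (w : List A) :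
    occCount [b] w = {i : ℕ | w[i]? = some b}.ncard := by
  rw [occCount]
  congr 1
  ext i
  simp only [List.length_singleton, Set.mem_ofPred_eq, List.take_one, List.head?_drop]
  constructor
  · rintro ⟨-, h⟩
    cases hi : w[i]? <;> simp_all
  · intro h
    exact ⟨(List.getElem?_eq_some_iff.mp h).1, by simp [h]⟩

lemma FirstReturn.singleton_occurrences {b : A} {z : ℕ → A} {v : List A}
    (hv : FirstReturn [b] z v) {s : ℕ} (hs : OccursAt (v ++ [b]) z s) :
    0 < v.length ∧ z s = b ∧ ∀ m, s < m → m < s + v.length → z m ≠ b := by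
  obtain ⟨-, -, hpre, hcount⟩ := hv
  rw [occursAt_iff_chunk] at hs
  have hget : ∀ i ≤ v.length, (v ++ [b])[i]? = some (z (s + i)) := fun i hi => by
    rw [← hs]
    simp [chunk, Nat.lt_succ_of_le hi]
  set T := {i : ℕ | (v ++ [b])[i]? = some b}
  have hT : T.ncard = 2 := by rw [← occCount_singleton_s8]; exact hcount
  have hTfin : T.Finite := (Set.finite_Iio (v ++ [b]).length).subset fun i hi =>
    (List.getElem?_eq_some_iff.mp hi).1
  have h0 : 0 ∈ T := by
    obtain ⟨t, ht⟩ := hpre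
    simp [T, ← ht]
  have hend : v.length ∈ T := by simp [T]
  refine ⟨Nat.pos_of_ne_zero fun hv0 => ?_, ?_, fun m hm₁ hm₂ hzm => ?_⟩
  · have hsub : T ⊆ {0} := fun i hi => by
      have := (List.getElem?_eq_some_iff.mp hi).1
      simp only [List.length_append, hv0, List.length_singleton] at this
      simp only [Set.mem_singleton_iff]; omega
    have := Set.ncard_le_ncard hsub
    rw [Set.ncard_singleton] at this
    omega
  · have := hget 0 (Nat.zero_le _)
    rw [h0, add_zero] at this
    exact (Option.some_inj.mp this).symm
  · have hmT : m - s ∈ T := by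
      simp only [T, Set.mem_ofPred_eq]
      rw [hget _ (by omega), Nat.add_sub_cancel' hm₁.le, hzm]
    have := Set.ncard_le_ncard (s := {0, m - s, v.length})
      (by simp [Set.insert_subset_iff, h0, hmT, hend]) hTfin
    rw [Set.ncard_eq_three.mpr ⟨0, m - s, v.length, by omega, by omega, by omega, rfl⟩, hT] at this
    omega

lemma IsDerivedWord.exists_occurrenceEnum {y : ℕ → A} {d : ℕ → ℕ}
    (hd : IsDerivedWord y [y 0] d) :
    ∃ S, OccurrenceEnum y S ∧ ∀ m n, returnWord y S m = returnWord y S n → d m = d n := by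
  obtain ⟨r, hr, hocc, hdr⟩ := hd
  set S := fun n => ∑ i ∈ Finset.range n, (r i).length
  have hS : ∀ n, S (n + 1) = S n + (r n).length := fun n => Finset.sum_range_succ _ _
  have hspec := fun n => (hr n).singleton_occurrences (hocc n)
  have hE : OccurrenceEnum y S := .of_not_between (by simp [S])
    (strictMono_nat_of_lt_succ fun n => by rw [hS]; exact Nat.lt_add_of_pos_right (hspec n).1)
    (fun n => (hspec n).2.1) fun n m h₁ h₂ => (hspec n).2.2 m h₁ (hS n ▸ h₂)
  have hret : ∀ n, returnWord y S n = r n := fun n => by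
    have := (occursAt_iff_chunk _ _ _).mp (hocc n)
    rw [List.length_append, List.length_singleton, ← add_assoc,
      ← chunk_append y (Nat.le_add_right _ _) (Nat.le_add_right _ _)] at this
    rw [returnWord, hS]
    exact (List.append_inj this (by simp)).1
  refine ⟨S, hE, fun m n hmn => ?_⟩
  have hrmn : r m = r n := by rw [← hret, ← hret, hmn]
  rw [hdr m, hdr n, hrmn]

end

theorem derivedWord_primitiveMorphic_general {A : Type*} (y : ℕ → A)
    (hy : PrimitiveMorphic y) (d : ℕ → ℕ) (hd : IsDerivedWord y [y 0] d) :
    PrimitiveMorphic d := by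
  obtain ⟨A₀, _, f, x, hf, hx, hfx⟩ := hy
  obtain ⟨p, hp, hfin⟩ := hx.exists_occurrenceEnum
  obtain ⟨S, hS, hdS⟩ := hd.exists_occurrenceEnum
  obtain ⟨φ, hφ, hφd⟩ := exists_isMorphicImage_rangeFactorization hf hfx hp hS hdS
  exact ⟨_, hfin.fintype, φ, _, hφ, hx.rangeFactorization_returnWord hp hfin, hφd⟩

/-- The derived word of a primitive morphic word `y` at the prefix
consisting of its first letter is primitive morphic. -/
theorem derivedWord_primitiveMorphic {A : Type*} [Fintype A] (y : ℕ → A)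
    (hy : PrimitiveMorphic y) (d : ℕ → ℕ) (hd : IsDerivedWord y [y 0] d) :
    PrimitiveMorphic d :=
  derivedWord_primitiveMorphic_general y hy d hd
end

section
/- Let y be the fixed point beginning in the letter c of the substitution τ : b ↦ ccb, c ↦ cb on {b, c}, let h : {b,c}* → {a,b,c}* be the morphism b ↦ ab, c ↦ ac (which inserts the letter a before every occurrence of b and of c), and let x be the fixed point beginning in the letter a of the substitution f : a ↦ ac, b ↦ acab, c ↦ ab on {a, b, c}. Then x = h(y). -/
open List

/-!
The morphism `h` intertwines the two substitutions letterwise, `h ∘ τ = f ∘ h`, hence also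
their iterates. Since `τ` is growing, `τ^k(c)` is a prefix of `y` of length at least `k`, and
its image `h(τ^k(c)) = f^k(h(c)) = f^k(ac)` is a prefix of `x`, because `ac = f(a)` is one.
So the image of every prefix of `y` is a prefix of `x`.
-/

section Morphisms

variable {A B : Type*}

@[simp]
lemma length_wordTake (x : ℕ → A) (n : ℕ) : (wordTake x n).length = n := by
  simp [wordTake]

lemma take_wordTake (x : ℕ → A) (m n : ℕ) :
    (wordTake x n).take m = wordTake x (min m n) := by
  simp [wordTake, ← List.map_take, List.take_range]

lemma eq_wordTake_of_prefix {x : ℕ → A} {u : List A} {n : ℕ} (h : u <+: wordTake x n) :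
    u = wordTake x u.length := by
  have hle : u.length ≤ n := by simpa using h.length_le
  rw [List.prefix_iff_eq_take.mp h, take_wordTake, min_eq_left hle, length_wordTake]

lemma wordTake_prefix_wordTake (x : ℕ → A) {m n : ℕ} (h : m ≤ n) :
    wordTake x m <+: wordTake x n := by
  rw [← min_eq_left h, ← take_wordTake]
  exact List.take_prefix _ _

lemma IsMorphicImage.iterate {σ : A → List A} {x : ℕ → A} (hx : IsMorphicImage σ x x)
    (m k : ℕ) : ∃ n, (listApply σ)^[m] (wordTake x k) = wordTake x n := by
  induction m generalizing k with
  | zero => exact ⟨k, rfl⟩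
  | succ m ih =>
    obtain ⟨n, hn⟩ := hx k
    obtain ⟨n', hn'⟩ := ih n
    exact ⟨n', by rw [Function.iterate_succ_apply, hn, hn']⟩

lemma two_mul_length_le_listApply {σ : A → List A} (hσ : ∀ a, 2 ≤ (σ a).length)
    (w : List A) : 2 * w.length ≤ (listApply σ w).length := by
  induction w with
  | nil => simp [listApply]
  | cons a w ih =>
    simp only [listApply, List.flatMap_cons, List.length_append, List.length_cons] at ih ⊢
    linarith [hσ a]

lemma two_pow_mul_length_le_iterate {σ : A → List A} (hσ : ∀ a, 2 ≤ (σ a).length)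
    (m : ℕ) (w : List A) : 2 ^ m * w.length ≤ ((listApply σ)^[m] w).length := by
  induction m generalizing w with
  | zero => simp
  | succ m ih =>
    calc 2 ^ (m + 1) * w.length = 2 ^ m * (2 * w.length) := by ring
      _ ≤ 2 ^ m * (listApply σ w).length :=
        Nat.mul_le_mul_left _ (two_mul_length_le_listApply hσ w)
      _ ≤ _ := ih _

lemma semiconj_listApply {τ : A → List A} {f : B → List B} {h : A → List B}
    (hcomm : ∀ a, listApply h (τ a) = listApply f (h a)) :
    Function.Semiconj (listApply h) (listApply τ) (listApply f) := by
  intro w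
  simp only [listApply, List.flatMap_assoc]
  exact congrArg (List.flatMap · w) (funext hcomm)

theorem IsMorphicImage.of_semiconj {τ : A → List A} {f : B → List B} {h : A → List B}
    {y : ℕ → A} {x : ℕ → B} (hcomm : ∀ a, listApply h (τ a) = listApply f (h a))
    (hτ : ∀ a, 2 ≤ (τ a).length) (hy : IsMorphicImage τ y y) (hx : IsMorphicImage f x x)
    (hxy : ∃ n, h (y 0) = wordTake x n) : IsMorphicImage h y x := by
  intro k
  obtain ⟨n, hn⟩ := hxy
  obtain ⟨K, hK⟩ := hy.iterate k 1
  obtain ⟨N, hN⟩ := hx.iterate k n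
  have hkK : k ≤ K := by
    have := two_pow_mul_length_le_iterate hτ k (wordTake y 1)
    rw [hK] at this
    simp only [length_wordTake, mul_one] at this
    exact (Nat.lt_two_pow_self).le.trans this
  have hstart : listApply h (wordTake y 1) = wordTake x n := by
    simp [wordTake, listApply, hn]
  have hpre : listApply h (wordTake y k) <+: wordTake x N := by
    rw [← hN, ← hstart, ← (semiconj_listApply hcomm).iterate_right k, hK]
    exact (wordTake_prefix_wordTake y hkK).flatMap h
  exact ⟨_, eq_wordTake_of_prefix hpre⟩

end Morphisms

/-- `{b, c}` is encoded as `Fin 2` (`b = 0, c = 1`) and `{a, b, c}` as `Fin 3`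
(`a = 0, b = 1, c = 2`). -/
theorem labbe_word_eq_image (y : ℕ → Fin 2)
    (hy : IsMorphicImage (![[1, 1, 0], [1, 0]] : Fin 2 → List (Fin 2)) y y)
    (hy0 : y 0 = 1) (x : ℕ → Fin 3)
    (hx : IsMorphicImage (![[0, 2], [0, 2, 0, 1], [0, 1]] : Fin 3 → List (Fin 3)) x x)
    (hx0 : x 0 = 0) :
    IsMorphicImage (![[0, 1], [0, 2]] : Fin 2 → List (Fin 3)) y x := by
  refine IsMorphicImage.of_semiconj (by decide) (by decide) hy hx ?_
  obtain ⟨n, hn⟩ := hx 1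
  refine ⟨n, ?_⟩
  rw [← hn, hy0]
  simp [wordTake, listApply, hx0]
end

section
/- Class P is not closed under composition: the morphisms f : 0 ↦ 0, 1 ↦ 01 and g : 0 ↦ 01, 1 ↦ 011 on the alphabet {0, 1} are both of class P, but their composition g∘f : 0 ↦ 01, 1 ↦ 01011 is not of class P. -/
open List

/-! The common palindromic prefix `p` of a class P decomposition is a prefix of every image, so
membership in class P is a finite search over the prefixes of one image. For `g ∘ f` the image
`01` leaves only `p = 0`, and then `01011 = 0 · 1011` with `1011` not a palindrome. -/

instance IsPalindrome.decidablePred {B : Type*} [DecidableEq B] :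
    DecidablePred (IsPalindrome : List B → Prop) :=
  fun u => inferInstanceAs (Decidable (u.reverse = u))

theorem classP_iff_exists_mem_inits {A B : Type*} (f : A → List B) (a₀ : A) :
    ClassP f ↔ ∃ p ∈ (f a₀).inits, IsPalindrome p ∧
      ∀ a, p <+: f a ∧ IsPalindrome ((f a).drop p.length) := by
  constructor
  · rintro ⟨p, hp, h⟩
    have prefix_and_rest (a : A) : p <+: f a ∧ IsPalindrome ((f a).drop p.length) := by
      obtain ⟨q, hq, e⟩ := h a
      rw [e, List.drop_left]
      exact ⟨List.prefix_append p q, hq⟩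
    exact ⟨p, (List.mem_inits _ _).2 (prefix_and_rest a₀).1, hp, prefix_and_rest⟩
  · rintro ⟨p, -, hp, h⟩
    exact ⟨p, hp, fun a => ⟨_, (h a).2, (List.prefix_iff_eq_append.1 (h a).1).symm⟩⟩

/-- Class P is not closed under composition: `f : 0 ↦ 0, 1 ↦ 01` and
`g : 0 ↦ 01, 1 ↦ 011` are of class P, but `g ∘ f : 0 ↦ 01, 1 ↦ 01011` is not. -/
theorem classP_not_closed_comp :
    ClassP (![[0], [0, 1]] : Fin 2 → List (Fin 2)) ∧
    ClassP (![[0, 1], [0, 1, 1]] : Fin 2 → List (Fin 2)) ∧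
    ¬ ClassP (fun a : Fin 2 =>
        listApply (![[0, 1], [0, 1, 1]] : Fin 2 → List (Fin 2))
          ((![[0], [0, 1]] : Fin 2 → List (Fin 2)) a)) := by
  refine ⟨?_, ?_, ?_⟩ <;> rw [classP_iff_exists_mem_inits _ 0] <;> decide
end

section
/- Every morphism in class P_ret belongs to class P'; that is, every class P_ret morphism is conjugate to some class P morphism. -/
open List

/-! Since `p` and `f a ++ p` are palindromes, `f a ++ p = p ++ (f a).reverse`. Split
`p = u ++ c ++ u.reverse` with `|u| = ⌊|p| / 2⌋` and `|c| ≤ 1`. Then `f a ++ u` is the prefix of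
`f a ++ p` of length `|f a| + |u|`; it begins with `u ++ c`, because `f a` is non-empty (`p` occurs
only once in `p` itself), and what remains is a factor of the palindrome `f a ++ p` placed
symmetrically about its centre, hence a palindrome `q a`. So `f a ++ u = u ++ (c ++ q a)`. -/

section

variable {A : Type*}

lemma occCount_self (p : List A) : occCount p p = 1 := by
  have : {i : ℕ | i + p.length ≤ p.length ∧ (p.drop i).take p.length = p} = {0} := by
    ext i
    constructor
    · rintro ⟨hi, -⟩
      simp only [Set.mem_singleton_iff]
      omega
    · rintro rfl
      simp
  rw [occCount, this, Set.ncard_singleton]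

lemma ne_nil_of_occCount_append_eq_two {p v : List A}
    (h : occCount p (v ++ p) = 2) : v ≠ [] := by
  rintro rfl
  rw [nil_append, occCount_self] at h
  omega

lemma IsPalindrome.of_length_le_one {c : List A} (hc : c.length ≤ 1) :
    IsPalindrome c := by
  match c, hc with
  | [], _ => rfl
  | [_], _ => rfl

lemma IsPalindrome.drop_take_length_sub {w : List A} (hw : IsPalindrome w)
    (i : ℕ) : IsPalindrome ((w.take (w.length - i)).drop i) := by
  unfold IsPalindrome at hw ⊢
  rw [reverse_drop, reverse_take, hw, length_take, drop_take]
  rcases le_or_gt i w.length with hi | hi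
  · congr 2 <;> omega
  · simp [drop_eq_nil_of_le, hi.le]

lemma IsPalindrome.append_eq_append_reverse {p v : List A} (hp : IsPalindrome p)
    (hvp : IsPalindrome (v ++ p)) : v ++ p = p ++ v.reverse := by
  conv_lhs => rw [← hvp, reverse_append, hp]

lemma IsPalindrome.exists_append_take_half_eq {p v : List A} (hp : IsPalindrome p)
    (hvp : IsPalindrome (v ++ p)) (hv : p.length % 2 ≤ v.length) :
    ∃ q, IsPalindrome q ∧
      v ++ p.take (p.length / 2) = p.take (p.length - p.length / 2) ++ q := by
  set h := p.length / 2
  set k := p.length - h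
  have hlen : (v ++ p).length - k = v.length + h := by simp only [length_append]; omega
  set w := (v ++ p).take (v.length + h) with hw
  refine ⟨w.drop k, by rw [hw, ← hlen]; exact hvp.drop_take_length_sub k, ?_⟩
  calc v ++ p.take h = w := by
        rw [hw, take_append, take_of_length_le (l := v) (by omega), Nat.add_sub_cancel_left]
    _ = w.take k ++ w.drop k := (take_append_drop _ _).symm
    _ = p.take k ++ w.drop k := by
      rw [hw, take_take, min_eq_left (by omega), hp.append_eq_append_reverse hvp,
        take_append_of_le_length (by omega)]

end

/-- Every class P_ret morphism belongs to class P', i.e. is conjugate to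
some class P morphism. -/
theorem classPret_subset_classP' {A B : Type*} (f : A → List B) (hf : ClassPret f) :
    ClassP' f := by
  obtain ⟨-, p, hp, hfp⟩ := hf
  set h := p.length / 2
  set c := (p.take (p.length - h)).drop h
  have hq : ∀ a, ∃ q, IsPalindrome q ∧ f a ++ p.take h = p.take (p.length - h) ++ q := by
    intro a
    have hfa : f a ≠ [] := ne_nil_of_occCount_append_eq_two (hfp a).2.2.2
    refine hp.exists_append_take_half_eq (hfp a).1 ?_
    have := length_pos_iff.mpr hfa
    omega
  choose q hq hfq using hq
  have hc : IsPalindrome c := .of_length_le_one (by simp only [c, length_drop, length_take]; omega)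
  have hpc : p.take (p.length - h) = p.take h ++ c := by
    rw [← take_append_drop h (p.take (p.length - h)), take_take, min_eq_left (by omega)]
  refine ⟨fun a => c ++ q a, ⟨c, hc, fun a => ⟨q a, hq a, rfl⟩⟩, p.take h, Or.inl fun a => ?_⟩
  rw [hfq, hpc, append_assoc]
end
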